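/- Let I ⊆ ℝ be an interval, E a normed space, and W an open subset of E. Let k : I → ℝ_{>0} be a regulated function and f : I × W → E a function satisfying ‖f(t,x₁) − f(t,x₂)‖ ≤ k(t)‖x₁ − x₂‖ for all t ∈ I and x₁, x₂ ∈ W. Let u₁, u₂ : I → W be differentiable functions that are approximate solutions of the differential equation ċ(t) = f(t, c(t)) in the sense that ‖u̇ᵢ(t) − f(t, uᵢ(t))‖ ≤ εᵢ for all t ∈ I and i = 1, 2. Then for t₀ ∈ I and all t ∈ I with t ≥ t₀: ‖u₁(t) − u₂(t)‖ ≤ ‖u₁(t₀) − u₂(t₀)‖·Λ(t) + (ε₁ + ε₂)·Π(t), where Λ(t) = 1 + ∫_{t₀}^{t} k(s) exp(∫_{s}^{t} k(τ) dτ) ds and Π(t) = (t − t₀) + ∫_{t₀}^{t} (s − t₀) k(s) exp(∫_{s}^{t} k(τ) dτ) ds. -/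

import Mathlib

/-- A function `k` is regulated on a set `I ⊆ ℝ` if it admits one-sided limits
(from within `I`) at every point of `I`. -/
def RegulatedOn (k : ℝ → ℝ) (I : Set ℝ) : Prop :=
  ∀ t ∈ I, (∃ l : ℝ, Filter.Tendsto k (nhdsWithin t (I ∩ Set.Iio t)) (nhds l)) ∧
    (∃ l : ℝ, Filter.Tendsto k (nhdsWithin t (I ∩ Set.Ioi t)) (nhds l))

/-!
With `φ = ‖u₁ - u₂‖` and `ε = ε₁ + ε₂`, the Lipschitz bound gives `‖u̇₁ - u̇₂‖ ≤ k φ + ε`, so the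
mean value inequality yields `φ x ≤ φ t₀ + ε (x - t₀) + ∫_{t₀}^x k φ`, and Gronwall's lemma turns
this into the stated bound. Since `k` may jump, Gronwall's lemma is proved with right derivatives:
with `K = ∫ k` and `ψ = ∫ k φ`, the function `∫ v k e^{-K} - ψ e^{-K}` has right derivative
`k(x⁺) e^{-K} (v + ψ - φ) ≥ 0`. A regulated function is continuous off a countable set and
bounded on compact subsets, hence integrable on compact subintervals.
-/

open Set Filter Topology MeasureTheory intervalIntegral

section OneSidedLimits

variable {α β : Type*} [LinearOrder α] [TopologicalSpace α] [OrderTopology α]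
  [SecondCountableTopology α] [PseudoMetricSpace β] {f : α → β} {s : Set α}

theorem countable_not_continuousWithinAt_Ioi_of_exists_tendsto
    (hf : ∀ x ∈ s, ∃ l, Tendsto f (𝓝[s ∩ Ioi x] x) (𝓝 l)) :
    {x ∈ s | ¬ContinuousWithinAt f (s ∩ Ioi x) x}.Countable := by
  set D : ℝ → Set α := fun ε => {x ∈ s | ¬∀ᶠ y in 𝓝[s ∩ Ioi x] x, dist (f y) (f x) < ε}
  -- right after a point of `D ε`, `f` stays `ε / 2`-close to its right limit, so misses `D ε`
  have hisolated : ∀ ε > 0, ∀ x ∈ D ε, 𝓝[D ε ∩ Ioi x] x = ⊥ := by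
    intro ε hε x hx
    obtain ⟨l, hl⟩ := hf x hx.1
    have hnear : ∀ᶠ y in 𝓝[s ∩ Ioi x] x, dist (f y) l < ε / 2 :=
      hl (Metric.ball_mem_nhds l (half_pos hε))
    have hnot : ∀ᶠ y in 𝓝[s ∩ Ioi x] x, y ∉ D ε := by
      filter_upwards [eventually_eventually_nhdsWithin.2 hnear, hnear, self_mem_nhdsWithin]
        with y hy hyl hyx hyD
      refine hyD.2 ?_
      filter_upwards [nhdsWithin_mono y (inter_subset_inter_right s (Ioi_subset_Ioi hyx.2.le)) hy]
        with z hz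
      exact (dist_triangle_right _ _ l).trans_lt (by linarith)
    rw [← empty_mem_iff_bot]
    filter_upwards [nhdsWithin_mono x (inter_subset_inter_left _ fun y hy => hy.1) hnot,
      self_mem_nhdsWithin] with y hy hy' using hy hy'.1
  have hcover : {x ∈ s | ¬ContinuousWithinAt f (s ∩ Ioi x) x} ⊆
      ⋃ n : ℕ, {x ∈ D (1 / (n + 1)) | 𝓝[D (1 / (n + 1)) ∩ Ioi x] x = ⊥} := by
    rintro x ⟨hxs, hx⟩
    rw [ContinuousWithinAt, Metric.tendsto_nhds] at hx
    push Not at hx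
    obtain ⟨ε, hε, hxε⟩ := hx
    obtain ⟨n, hn⟩ := exists_nat_one_div_lt hε
    have hxD : x ∈ D (1 / (n + 1)) :=
      ⟨hxs, fun h => hxε (h.mono fun y hy => not_le.2 (hy.trans hn))⟩
    exact mem_iUnion.2 ⟨n, hxD, hisolated _ Nat.one_div_pos_of_nat x hxD⟩
  exact (countable_iUnion fun n => countable_setOfPred_isolated_right_within).mono hcover

theorem countable_not_continuousWithinAt_Iio_of_exists_tendsto
    (hf : ∀ x ∈ s, ∃ l, Tendsto f (𝓝[s ∩ Iio x] x) (𝓝 l)) :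
    {x ∈ s | ¬ContinuousWithinAt f (s ∩ Iio x) x}.Countable :=
  countable_not_continuousWithinAt_Ioi_of_exists_tendsto (α := αᵒᵈ) hf

end OneSidedLimits

namespace RegulatedOn

variable {k : ℝ → ℝ} {I : Set ℝ}

theorem countable_not_continuousWithinAt (hk : RegulatedOn k I) :
    {t ∈ I | ¬ContinuousWithinAt k I t}.Countable := by
  refine ((countable_not_continuousWithinAt_Iio_of_exists_tendsto fun t ht => (hk t ht).1).union
    (countable_not_continuousWithinAt_Ioi_of_exists_tendsto fun t ht => (hk t ht).2)).mono ?_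
  rintro t ⟨htI, ht⟩
  contrapose! ht
  simp only [mem_union, mem_ofPred_eq, not_or, not_and, not_not] at ht
  exact continuousWithinAt_iff_continuous_left'_right'.2 ⟨ht.1 htI, ht.2 htI⟩

theorem aestronglyMeasurable (hk : RegulatedOn k I) {μ : Measure ℝ} [NullSingletonClass μ]
    {s : Set ℝ} (hs : MeasurableSet s) (hsI : s ⊆ I) : AEStronglyMeasurable k (μ.restrict s) := by
  set D := {t ∈ I | ¬ContinuousWithinAt k I t}
  have hD : D.Countable := hk.countable_not_continuousWithinAt
  have hcont : ContinuousOn k (s \ D) := fun t ht =>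
    ((not_not.1 fun h => ht.2 ⟨hsI ht.1, h⟩).mono hsI).mono sdiff_subset
  rw [← Measure.restrict_congr_set (sdiff_null_ae_eq_self (hD.measure_zero μ))]
  exact hcont.aestronglyMeasurable (hs.diff hD.measurableSet)

theorem exists_mem_nhdsWithin_isBounded_image (hk : RegulatedOn k I) {t : ℝ} (ht : t ∈ I) :
    ∃ U ∈ 𝓝[I] t, Bornology.IsBounded (k '' U) := by
  obtain ⟨⟨l₁, h₁⟩, ⟨l₂, h₂⟩⟩ := hk t ht
  obtain ⟨A, hA, hAb⟩ := Metric.exists_isBounded_image_of_tendsto h₁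
  obtain ⟨B, hB, hBb⟩ := Metric.exists_isBounded_image_of_tendsto h₂
  refine ⟨insert t (A ∪ B), ?_, ?_⟩
  · refine nhdsWithin_mono t (subset_insert_sdiff_singleton t I) (insert_mem_nhdsWithin_insert ?_)
    rw [← nhdsWithinLT_sup_nhdsWithinGT]
    exact union_mem_sup hA hB
  · rw [image_insert_eq, image_union]
    exact (hAb.union hBb).insert _

theorem isBounded_image (hk : RegulatedOn k I) {K : Set ℝ} (hK : IsCompact K) (hKI : K ⊆ I) :
    Bornology.IsBounded (k '' K) := by
  refine hK.induction_on (p := fun s => Bornology.IsBounded (k '' s)) (by simp)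
    (fun s t hst ht => ht.subset (image_mono hst))
    (fun s t hs ht => by simpa only [image_union] using hs.union ht) fun t ht => ?_
  obtain ⟨U, hU, hUb⟩ := hk.exists_mem_nhdsWithin_isBounded_image (hKI ht)
  exact ⟨U, nhdsWithin_mono t hKI hU, hUb⟩

theorem integrableOn (hk : RegulatedOn k I) {μ : Measure ℝ} [NullSingletonClass μ]
    [IsLocallyFiniteMeasure μ] {K : Set ℝ} (hK : IsCompact K) (hKI : K ⊆ I) :
    IntegrableOn k K μ := by
  obtain ⟨C, hC⟩ := isBounded_iff_forall_norm_le.1 (hk.isBounded_image hK hKI)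
  exact .of_bound hK.measure_lt_top (hk.aestronglyMeasurable hK.measurableSet hKI) C
    ((ae_restrict_mem hK.measurableSet).mono fun t ht => hC _ (mem_image_of_mem k ht))

theorem exists_tendsto_nhdsGT (hk : RegulatedOn k I) {x : ℝ} (hx : I ∈ 𝓝 x) :
    ∃ c, Tendsto k (𝓝[>] x) (𝓝 c) := by
  obtain ⟨c, hc⟩ := (hk x (mem_of_mem_nhds hx)).2
  rw [nhdsWithin_inter_of_mem (mem_nhdsWithin_of_mem_nhds hx)] at hc
  exact ⟨c, hc⟩

end RegulatedOn

section Primitive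

variable {E : Type*} [NormedAddCommGroup E] [NormedSpace ℝ E] [CompleteSpace E]
  {f : ℝ → E} {a b x : ℝ} {c : E}

theorem hasDerivWithinAt_Ioi_integral_of_tendsto (hf : IntegrableOn f (Icc a b))
    (hx : x ∈ Ioo a b) (hc : Tendsto f (𝓝[>] x) (𝓝 c)) :
    HasDerivWithinAt (fun y => ∫ s in a..y, f s) c (Ioi x) x := by
  have hmeas : StronglyMeasurableAtFilter f (𝓝[>] x) :=
    ⟨Ioo x b, Ioo_mem_nhdsGT hx.2,
      hf.1.mono_measure (Measure.restrict_mono (Ioo_subset_Icc_self.trans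
        (Icc_subset_Icc hx.1.le le_rfl)) le_rfl)⟩
  exact (integral_hasDerivWithinAt_of_tendsto_ae_right (s := Ici x) (t := Ioi x)
    ((intervalIntegrable_iff_integrableOn_Icc_of_le hx.1.le).2
      (hf.mono_set (Icc_subset_Icc le_rfl hx.2.le))) hmeas
    (hc.mono_left inf_le_left)).mono Ioi_subset_Ici_self

end Primitive

theorem norm_le_add_integral_of_norm_deriv_le {E : Type*} [NormedAddCommGroup E]
    [NormedSpace ℝ E] {g g' : ℝ → E} {k : ℝ → ℝ} {a b ε : ℝ} (hab : a ≤ b)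
    (hg : ContinuousOn g (Icc a b)) (hg' : ∀ x ∈ Ioo a b, HasDerivAt g (g' x) x)
    (hk : IntegrableOn k (Icc a b)) (hbound : ∀ x ∈ Ioo a b, ‖g' x‖ ≤ k x * ‖g x‖ + ε) :
    ‖g b‖ ≤ ‖g a‖ + ε * (b - a) + ∫ x in a..b, k x * ‖g x‖ := by
  have hkg : IntervalIntegrable (fun x => k x * ‖g x‖) volume a b :=
    (intervalIntegrable_iff_integrableOn_Icc_of_le hab).2
      (hk.mul_continuousOn hg.norm isCompact_Icc)
  have hdisp := norm_sub_le_integral_of_norm_deriv_le_of_le hab hg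
    (fun x hx => (hg' x hx).differentiableAt.differentiableWithinAt)
    (ae_of_all _ fun x hx => (hg' x hx).deriv ▸ hbound x hx) (hkg.add intervalIntegrable_const)
  rw [intervalIntegral.integral_add hkg intervalIntegrable_const, intervalIntegral.integral_const,
    smul_eq_mul] at hdisp
  linarith [norm_sub_norm_le (g b) (g a)]

section Gronwall

variable {k φ v : ℝ → ℝ} {a b : ℝ}

theorem continuousOn_primitive_Icc_of_le {f : ℝ → ℝ} (hab : a ≤ b)
    (hf : IntegrableOn f (Icc a b)) : ContinuousOn (fun x => ∫ s in a..x, f s) (Icc a b) := by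
  have := continuousOn_primitive_interval (μ := volume) (a := a) (b := b) (f := f)
  rw [uIcc_of_le hab] at this
  exact this hf

theorem integral_mul_mul_exp_neg_le (hab : a ≤ b) (hk : IntegrableOn k (Icc a b))
    (hk_nonneg : ∀ x ∈ Ioo a b, 0 ≤ k x) (hk_lim : ∀ x ∈ Ioo a b, ∃ c, Tendsto k (𝓝[>] x) (𝓝 c))
    (hφ : ContinuousOn φ (Icc a b)) (hv : ContinuousOn v (Icc a b))
    (h : ∀ x ∈ Ioo a b, φ x ≤ v x + ∫ s in a..x, k s * φ s) :
    (∫ s in a..b, k s * φ s) * Real.exp (-∫ s in a..b, k s) ≤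
      ∫ s in a..b, v s * k s * Real.exp (-∫ τ in a..s, k τ) := by
  set K := fun x => ∫ s in a..x, k s
  set ψ := fun x => ∫ s in a..x, k s * φ s
  set P := fun x => ∫ s in a..x, v s * k s * Real.exp (-K s)
  have hE : ContinuousOn (fun x => Real.exp (-K x)) (Icc a b) :=
    (continuousOn_primitive_Icc_of_le hab hk).neg.rexp
  have hkφ : IntegrableOn (fun s => k s * φ s) (Icc a b) := hk.mul_continuousOn hφ isCompact_Icc
  have hw : IntegrableOn (fun s => v s * k s * Real.exp (-K s)) (Icc a b) :=
    (hk.continuousOn_mul hv isCompact_Icc).mul_continuousOn hE isCompact_Icc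
  have hderiv : ∀ x ∈ Ioo a b, HasDerivWithinAt (fun y => P y - ψ y * Real.exp (-K y))
      (Function.rightLim k x * Real.exp (-K x) * (v x + ψ x - φ x)) (Ioi x) x := by
    intro x hx
    have hκ := tendsto_rightLim_of_tendsto (hk_lim x hx)
    have hnhds : 𝓝[>] x ≤ 𝓝[Icc a b] x :=
      nhdsWithin_le_nhds.trans (nhdsWithin_eq_nhds.2 (Icc_mem_nhds hx.1 hx.2)).ge
    have hK := hasDerivWithinAt_Ioi_integral_of_tendsto hk hx hκ
    have hψ := hasDerivWithinAt_Ioi_integral_of_tendsto hkφ hx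
      (hκ.mul ((hφ x (Ioo_subset_Icc_self hx)).mono_left hnhds))
    have hP := hasDerivWithinAt_Ioi_integral_of_tendsto hw hx
      (((hv x (Ioo_subset_Icc_self hx)).mono_left hnhds).mul hκ |>.mul
        ((hE x (Ioo_subset_Icc_self hx)).mono_left hnhds))
    refine (hP.sub (hψ.mul hK.fun_neg.exp)).congr_deriv ?_
    ring
  have hκ_nonneg : ∀ x ∈ Ioo a b, 0 ≤ Function.rightLim k x := fun x hx =>
    ge_of_tendsto (tendsto_rightLim_of_tendsto (hk_lim x hx)) <|
      mem_of_superset (Ioo_mem_nhdsGT hx.2) fun y hy => hk_nonneg y ⟨hx.1.trans hy.1, hy.2⟩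
  have hmono := integral_le_sub_of_hasDeriv_right_of_le hab
    ((continuousOn_primitive_Icc_of_le hab hw).sub
      ((continuousOn_primitive_Icc_of_le hab hkφ).mul hE)) hderiv
    (integrableOn_const (C := (0 : ℝ)) measure_Icc_lt_top.ne) fun x hx =>
      mul_nonneg (mul_nonneg (hκ_nonneg x hx) (Real.exp_pos _).le) (by linarith [h x hx])
  simpa [P, ψ, K] using hmono

theorem le_add_integral_mul_exp_of_le_add_integral (hab : a ≤ b) (hk : IntegrableOn k (Icc a b))
    (hk_nonneg : ∀ x ∈ Ioo a b, 0 ≤ k x) (hk_lim : ∀ x ∈ Ioo a b, ∃ c, Tendsto k (𝓝[>] x) (𝓝 c))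
    (hφ : ContinuousOn φ (Icc a b)) (hv : ContinuousOn v (Icc a b))
    (h : ∀ x ∈ Icc a b, φ x ≤ v x + ∫ s in a..x, k s * φ s) :
    φ b ≤ v b + ∫ s in a..b, v s * k s * Real.exp (∫ τ in s..b, k τ) := by
  have hkab : IntervalIntegrable k volume a b :=
    (intervalIntegrable_iff_integrableOn_Icc_of_le hab).2 hk
  set K := ∫ s in a..b, k s
  have hψ : ∫ s in a..b, k s * φ s ≤ ∫ s in a..b, v s * k s * Real.exp (∫ τ in s..b, k τ) :=
    calc ∫ s in a..b, k s * φ s = (∫ s in a..b, k s * φ s) * Real.exp (-K) * Real.exp K := by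
          rw [mul_assoc, ← Real.exp_add, neg_add_cancel, Real.exp_zero, mul_one]
      _ ≤ (∫ s in a..b, v s * k s * Real.exp (-∫ τ in a..s, k τ)) * Real.exp K :=
          mul_le_mul_of_nonneg_right (integral_mul_mul_exp_neg_le hab hk hk_nonneg hk_lim hφ hv
            fun x hx => h x (Ioo_subset_Icc_self hx)) (Real.exp_pos K).le
      _ = ∫ s in a..b, v s * k s * Real.exp (∫ τ in s..b, k τ) := by
          rw [← intervalIntegral.integral_mul_const]
          refine integral_congr fun s hs => ?_
          rw [← integral_interval_sub_left hkab (hkab.mono_set (uIcc_subset_uIcc_left hs)),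
            sub_eq_neg_add, Real.exp_add]
          ring
  linarith [h b (right_mem_Icc.2 hab)]

theorem le_mul_add_mul_of_le_add_integral (hab : a ≤ b) (hk : IntegrableOn k (Icc a b))
    (hk_nonneg : ∀ x ∈ Ioo a b, 0 ≤ k x) (hk_lim : ∀ x ∈ Ioo a b, ∃ c, Tendsto k (𝓝[>] x) (𝓝 c))
    (hφ : ContinuousOn φ (Icc a b)) {δ ε : ℝ}
    (h : ∀ x ∈ Icc a b, φ x ≤ δ + ε * (x - a) + ∫ s in a..x, k s * φ s) :
    φ b ≤ δ * (1 + ∫ s in a..b, k s * Real.exp (∫ τ in s..b, k τ)) +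
      ε * ((b - a) + ∫ s in a..b, (s - a) * k s * Real.exp (∫ τ in s..b, k τ)) := by
  set E := fun s => Real.exp (∫ τ in s..b, k τ)
  have hE : ContinuousOn E (Icc a b) := by
    have := continuousOn_primitive_interval_left (μ := volume) (a := a) (b := b) (f := k)
    rw [uIcc_of_le hab] at this
    exact (this hk).rexp
  have hkE : IntegrableOn (fun s => k s * E s) (Icc a b) := hk.mul_continuousOn hE isCompact_Icc
  have hskE : IntegrableOn (fun s => (s - a) * k s * E s) (Icc a b) := by
    simpa only [mul_assoc] using hkE.continuousOn_mul (by fun_prop) isCompact_Icc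
  have hII {f : ℝ → ℝ} (hf : IntegrableOn f (Icc a b)) : IntervalIntegrable f volume a b :=
    (intervalIntegrable_iff_integrableOn_Icc_of_le hab).2 hf
  have hsplit : ∫ s in a..b, (δ + ε * (s - a)) * k s * E s =
      δ * (∫ s in a..b, k s * E s) + ε * ∫ s in a..b, (s - a) * k s * E s := by
    rw [← intervalIntegral.integral_const_mul, ← intervalIntegral.integral_const_mul,
      ← intervalIntegral.integral_add ((hII hkE).const_mul δ) ((hII hskE).const_mul ε)]
    exact integral_congr fun s _ => by ring
  calc φ b ≤ δ + ε * (b - a) + ∫ s in a..b, (δ + ε * (s - a)) * k s * E s :=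
        le_add_integral_mul_exp_of_le_add_integral hab hk hk_nonneg hk_lim hφ (by fun_prop) h
    _ = _ := by rw [hsplit]; ring

end Gronwall

theorem approx_solutions_dist_le_general
    {E : Type*} [NormedAddCommGroup E] [NormedSpace ℝ E]
    (I : Set ℝ) (hI : Set.OrdConnected I)
    (W : Set E)
    (k : ℝ → ℝ) (hk_pos : ∀ t ∈ I, 0 < k t) (hk_reg : RegulatedOn k I)
    (f : ℝ → E → E)
    (hf : ∀ t ∈ I, ∀ x₁ ∈ W, ∀ x₂ ∈ W, ‖f t x₁ - f t x₂‖ ≤ k t * ‖x₁ - x₂‖)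
    (u₁ u₂ u₁' u₂' : ℝ → E)
    (hu₁W : ∀ t ∈ I, u₁ t ∈ W) (hu₂W : ∀ t ∈ I, u₂ t ∈ W)
    (hd₁ : ∀ t ∈ I, HasDerivWithinAt u₁ (u₁' t) I t)
    (hd₂ : ∀ t ∈ I, HasDerivWithinAt u₂ (u₂' t) I t)
    (ε₁ ε₂ : ℝ)
    (happ₁ : ∀ t ∈ I, ‖u₁' t - f t (u₁ t)‖ ≤ ε₁)
    (happ₂ : ∀ t ∈ I, ‖u₂' t - f t (u₂ t)‖ ≤ ε₂)
    (t₀ : ℝ) (ht₀ : t₀ ∈ I) :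
    ∀ t ∈ I, t₀ ≤ t →
      ‖u₁ t - u₂ t‖ ≤
        ‖u₁ t₀ - u₂ t₀‖ * (1 + ∫ s in t₀..t, k s * Real.exp (∫ τ in s..t, k τ)) +
        (ε₁ + ε₂) * ((t - t₀) + ∫ s in t₀..t, (s - t₀) * k s * Real.exp (∫ τ in s..t, k τ)) := by
  intro t ht ht₀t
  have hJ : Icc t₀ t ⊆ I := hI.out ht₀ ht
  have hI_nhds : ∀ x ∈ Ioo t₀ t, I ∈ 𝓝 x := fun x hx => mem_of_superset (Icc_mem_nhds hx.1 hx.2) hJ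
  have hk : IntegrableOn k (Icc t₀ t) := hk_reg.integrableOn isCompact_Icc hJ
  have hd : ∀ x ∈ I, HasDerivWithinAt (fun s => u₁ s - u₂ s) (u₁' x - u₂' x) I x :=
    fun x hx => (hd₁ x hx).sub (hd₂ x hx)
  have hcont : ContinuousOn (fun s => u₁ s - u₂ s) (Icc t₀ t) :=
    fun x hx => ((hd x (hJ hx)).continuousWithinAt).mono hJ
  have hbound : ∀ x ∈ I, ‖u₁' x - u₂' x‖ ≤ k x * ‖u₁ x - u₂ x‖ + (ε₁ + ε₂) := fun x hx => by
    have := dist_triangle4 (u₁' x) (f x (u₁ x)) (f x (u₂ x)) (u₂' x)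
    simp only [dist_eq_norm, norm_sub_rev (f x (u₂ x))] at this
    linarith [happ₁ x hx, happ₂ x hx, hf x hx _ (hu₁W x hx) _ (hu₂W x hx)]
  refine le_mul_add_mul_of_le_add_integral ht₀t hk
    (fun x hx => (hk_pos x (hJ (Ioo_subset_Icc_self hx))).le)
    (fun x hx => hk_reg.exists_tendsto_nhdsGT (hI_nhds x hx)) hcont.norm fun x hx => ?_
  have hxt : Icc t₀ x ⊆ Icc t₀ t := Icc_subset_Icc_right hx.2
  exact norm_le_add_integral_of_norm_deriv_le hx.1 (hcont.mono hxt)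
    (fun y hy => (hd y (hJ (hxt (Ioo_subset_Icc_self hy)))).hasDerivAt
      (hI_nhds y ⟨hy.1, hy.2.trans_le hx.2⟩))
    (hk.mono_set hxt) fun y hy => hbound y (hJ (hxt (Ioo_subset_Icc_self hy)))

/-- Fundamental estimate for approximate solutions of an ODE `ċ(t) = f(t, c(t))` with a
time-dependent Lipschitz bound `k` (a positive regulated function) on an interval `I`:
if `u₁, u₂ : I → W` are differentiable, `‖u̇ᵢ(t) − f(t, uᵢ(t))‖ ≤ εᵢ` on `I`, then for
`t₀ ≤ t` in `I`,
`‖u₁(t) − u₂(t)‖ ≤ ‖u₁(t₀) − u₂(t₀)‖ Λ(t) + (ε₁ + ε₂) Π(t)` where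
`Λ(t) = 1 + ∫_{t₀}^{t} k(s) exp(∫_s^t k) ds` and
`Π(t) = (t − t₀) + ∫_{t₀}^{t} (s − t₀) k(s) exp(∫_s^t k) ds`. -/
theorem approx_solutions_dist_le
    {E : Type*} [NormedAddCommGroup E] [NormedSpace ℝ E]
    (I : Set ℝ) (hI : Set.OrdConnected I)
    (W : Set E) (hW : IsOpen W)
    (k : ℝ → ℝ) (hk_pos : ∀ t ∈ I, 0 < k t) (hk_reg : RegulatedOn k I)
    (f : ℝ → E → E)
    (hf : ∀ t ∈ I, ∀ x₁ ∈ W, ∀ x₂ ∈ W, ‖f t x₁ - f t x₂‖ ≤ k t * ‖x₁ - x₂‖)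
    (u₁ u₂ u₁' u₂' : ℝ → E)
    (hu₁W : ∀ t ∈ I, u₁ t ∈ W) (hu₂W : ∀ t ∈ I, u₂ t ∈ W)
    (hd₁ : ∀ t ∈ I, HasDerivWithinAt u₁ (u₁' t) I t)
    (hd₂ : ∀ t ∈ I, HasDerivWithinAt u₂ (u₂' t) I t)
    (ε₁ ε₂ : ℝ)
    (happ₁ : ∀ t ∈ I, ‖u₁' t - f t (u₁ t)‖ ≤ ε₁)
    (happ₂ : ∀ t ∈ I, ‖u₂' t - f t (u₂ t)‖ ≤ ε₂)
    (t₀ : ℝ) (ht₀ : t₀ ∈ I) :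
    ∀ t ∈ I, t₀ ≤ t →
      ‖u₁ t - u₂ t‖ ≤
        ‖u₁ t₀ - u₂ t₀‖ * (1 + ∫ s in t₀..t, k s * Real.exp (∫ τ in s..t, k τ)) +
        (ε₁ + ε₂) * ((t - t₀) + ∫ s in t₀..t, (s - t₀) * k s * Real.exp (∫ τ in s..t, k τ)) :=
  approx_solutions_dist_le_general I hI W k hk_pos hk_reg f hf u₁ u₂ u₁' u₂' hu₁W hu₂W hd₁ hd₂ ε₁ ε₂
    happ₁ happ₂ t₀ ht₀
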